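/- arXiv:2201.13288 — 2 statements merged into one kernel-verified Lean document; each statement's English description precedes it below -/
import Mathlib

section
/- For t ≥ 1 define f_t : ℝ → ℝ by f_t(z) = (z − 1)² + 0.1·z² + 0.1 if t is odd and f_t(z) = (z + 1)² + 0.1·z² + 0.1 if t is even, and let z_t = (−1)^{t+1}. Then for every even T ≥ 2: (i) ∑_{t=1}^T f_t(z_t) = 0.2·T; (ii) for every z ∈ ℝ, ∑_{t=1}^T f_t(z) = 1.1·(T·z² + T) ≥ 1.1·T, with the minimum 1.1·T attained at z = 0; hence the individual regret ∑_{t=1}^T f_t(z_t) − min_{z ∈ ℝ} ∑_{t=1}^T f_t(z) equals −0.9·T, which is negative. -/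
/-! Playing `±1` in step with the loss's centre costs `0.2` per round, while any fixed
decision `w` pays `(w - 1)² + (w + 1)² + 0.2 w² + 0.2 = 2.2 (w² + 1)` over each pair
of consecutive rounds.
Hence the best fixed decision `w = 0` pays `1.1 T`, more than the `0.2 T` of the play. -/

open Finset

theorem Finset.sum_Icc_two_mul_ite_odd {M : Type*} [AddCommMonoid M] (a b : M) (k : ℕ) :
    ∑ t ∈ Icc 1 (2 * k), (if Odd t then a else b) = k • (a + b) := by
  induction k with
  | zero => simp
  | succ k ih =>
    rw [show 2 * (k + 1) = 2 * k + 1 + 1 by ring, sum_Icc_succ_top (by omega),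
      sum_Icc_succ_top (by omega), ih, if_pos (odd_two_mul_add_one k),
      if_neg (by simp [parity_simps]), succ_nsmul, add_assoc]

noncomputable def alternatingLoss (t : ℕ) (w : ℝ) : ℝ :=
  if Odd t then (w - 1) ^ 2 + 0.1 * w ^ 2 + 0.1 else (w + 1) ^ 2 + 0.1 * w ^ 2 + 0.1

theorem alternatingLoss_neg_one_pow_succ (t : ℕ) :
    alternatingLoss t ((-1) ^ (t + 1)) = 0.2 := by
  rcases Nat.even_or_odd t with ht | ht
  · simp [alternatingLoss, Nat.not_odd_iff_even.mpr ht, ht.add_one.neg_one_pow]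
    norm_num
  · simp [alternatingLoss, ht, ht.add_one.neg_one_pow]
    norm_num

theorem sum_alternatingLoss {T : ℕ} (hT : Even T) (w : ℝ) :
    ∑ t ∈ Icc 1 T, alternatingLoss t w = 1.1 * (T * w ^ 2 + T) := by
  obtain ⟨k, rfl⟩ := hT
  rw [← two_mul]
  simp only [alternatingLoss, sum_Icc_two_mul_ite_odd, nsmul_eq_mul]
  push_cast
  ring

/-- **Negative individual regret in the two-player counterexample.**  For the
induced losses `f t z = (z - 1)² + 0.1 z² + 0.1` (odd `t`) and
`f t z = (z + 1)² + 0.1 z² + 0.1` (even `t`), and the alternating plays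
`z t = (-1)^(t+1)`: for every even `T ≥ 2`, the total loss of the plays is `0.2 T`;
for every fixed `z` the total loss is `1.1 (T z² + T) ≥ 1.1 T`, with minimum
`1.1 T` attained at `z = 0`; hence the individual regret equals `-0.9 T < 0`. -/
theorem individual_regret_negative_example
    (f : ℕ → ℝ → ℝ)
    (hf : ∀ t : ℕ, ∀ w : ℝ,
      f t w = if Odd t then (w - 1) ^ 2 + 0.1 * w ^ 2 + 0.1
              else (w + 1) ^ 2 + 0.1 * w ^ 2 + 0.1)
    (z : ℕ → ℝ) (hz : ∀ t : ℕ, z t = (-1 : ℝ) ^ (t + 1))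
    (T : ℕ) (hT : 2 ≤ T) (hTeven : Even T) :
    (∑ t ∈ Finset.Icc 1 T, f t (z t) = 0.2 * T) ∧
    (∀ w : ℝ, ∑ t ∈ Finset.Icc 1 T, f t w = 1.1 * ((T : ℝ) * w ^ 2 + T) ∧
      1.1 * (T : ℝ) ≤ ∑ t ∈ Finset.Icc 1 T, f t w) ∧
    (∑ t ∈ Finset.Icc 1 T, f t (0 : ℝ) = 1.1 * T) ∧
    (∑ t ∈ Finset.Icc 1 T, f t (z t) - 1.1 * T = -0.9 * T ∧
      (-0.9 : ℝ) * T < 0) := by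
  obtain rfl : f = alternatingLoss := funext fun t => funext (hf t)
  obtain rfl : z = fun t => (-1) ^ (t + 1) := funext hz
  have hplay : ∑ t ∈ Icc 1 T, alternatingLoss t ((-1) ^ (t + 1)) = 0.2 * T := by
    simp only [alternatingLoss_neg_one_pow_succ, sum_const, Nat.card_Icc, nsmul_eq_mul,
      Nat.add_sub_cancel]
    ring
  have hsum := sum_alternatingLoss hTeven
  have hTpos : (0 : ℝ) < T := by exact_mod_cast (by omega : 0 < T)
  refine ⟨hplay, fun w => ⟨hsum w, ?_⟩, by rw [hsum 0]; ring, by rw [hplay]; ring, by linarith⟩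
  rw [hsum w]
  nlinarith [sq_nonneg w]
end

section
/- Let A be an n × n real matrix with ‖A^s‖ ≤ κ·ρ^s for all s ≥ 0 and some κ ≥ 0, 0 ≤ ρ < 1 (operator norm); let B be an n × m real matrix; let (u_t)_{t ≥ 0} in ℝᵐ satisfy ‖u_t‖ ≤ U for all t, and (w_t)_{t ≥ 0} be arbitrary in ℝⁿ. Define x_0 = 0 and x_{t+1} = A·x_t + B·u_t + w_t, and let x_t^nat = ∑_{s=0}^{t−1} A^s·w_{t−1−s}. Then for every h ≥ 0 and every t ≥ 1, ‖x_t − x_t^nat − ∑_{s=0}^{min(h,t)−1} A^s·B·u_{t−1−s}‖ ≤ κ·‖B‖·U·ρ^h / (1 − ρ). -/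
/-!
Unrolling the recursion gives `x t = ∑_{s<t} A^s (B u_{t-1-s} + w_{t-1-s})`, so the truncation
error is exactly the tail `∑_{h ≤ s < t} A^s B u_{t-1-s}` of the Markov-operator sum. Each term
has norm at most `κ ρ^s ‖B‖ U`, and the geometric tail `∑_{s ≥ h} ρ^s` is `ρ^h / (1 - ρ)`.
-/

open Finset

namespace ContinuousLinearMap

variable {R M : Type*} [Semiring R] [TopologicalSpace M] [AddCommMonoid M] [Module R M]

theorem eq_sum_pow_apply_of_succ_eq (A : M →L[R] M) {x v : ℕ → M} (hx0 : x 0 = 0)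
    (hx : ∀ t, x (t + 1) = A (x t) + v t) (t : ℕ) :
    x t = ∑ s ∈ range t, (A ^ s) (v (t - 1 - s)) := by
  induction t with
  | zero => simpa using hx0
  | succ t ih =>
    rw [hx t, ih, map_sum, sum_range_succ', add_comm]
    simp [pow_succ', Nat.sub_sub, add_comm]

end ContinuousLinearMap

theorem norm_sum_Ico_pow_apply_le {𝕜 E : Type*} [NontriviallyNormedField 𝕜]
    [NormedAddCommGroup E] [NormedSpace 𝕜 E] (A : E →L[𝕜] E) {κ ρ C : ℝ} (hκ : 0 ≤ κ)
    (hρ0 : 0 ≤ ρ) (hρ1 : ρ < 1) (hA : ∀ s : ℕ, ‖A ^ s‖ ≤ κ * ρ ^ s) {y : ℕ → E}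
    (hy : ∀ s, ‖y s‖ ≤ C) (a b : ℕ) :
    ‖∑ s ∈ Ico a b, (A ^ s) (y s)‖ ≤ κ * C * ρ ^ a / (1 - ρ) := by
  have hC : 0 ≤ C := (norm_nonneg _).trans (hy 0)
  calc ‖∑ s ∈ Ico a b, (A ^ s) (y s)‖
      ≤ ∑ s ∈ Ico a b, ‖A ^ s‖ * ‖y s‖ := norm_sum_le_of_le _ fun s _ => (A ^ s).le_opNorm _
    _ ≤ ∑ s ∈ Ico a b, κ * C * ρ ^ s := by
        refine sum_le_sum fun s _ => ?_
        calc ‖A ^ s‖ * ‖y s‖ ≤ κ * ρ ^ s * C := by gcongr; exacts [hA s, hy s]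
          _ = κ * C * ρ ^ s := by ring
    _ = κ * C * ∑ s ∈ Ico a b, ρ ^ s := (mul_sum _ _ _).symm
    _ ≤ κ * C * (ρ ^ a / (1 - ρ)) := by gcongr; exact geom_sum_Ico_le_of_lt_one hρ0 hρ1
    _ = κ * C * ρ ^ a / (1 - ρ) := by ring

/-- **Truncated Markov-operator approximation error.**  For the linear system
`x (t+1) = A (x t) + B (u t) + w t` with `x 0 = 0`, `‖A^s‖ ≤ κ ρ^s` (`0 ≤ ρ < 1`)
and bounded controls `‖u t‖ ≤ U`, the error of approximating `x t` by Nature's x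
plus the Markov operator restricted to the `h` most recent controls is at most
`κ ‖B‖ U ρ^h / (1 - ρ)`. -/
theorem markov_truncation_error {n m : ℕ}
    (A : EuclideanSpace ℝ (Fin n) →L[ℝ] EuclideanSpace ℝ (Fin n))
    (B : EuclideanSpace ℝ (Fin m) →L[ℝ] EuclideanSpace ℝ (Fin n))
    (κ ρ : ℝ) (hκ : 0 ≤ κ) (hρ0 : 0 ≤ ρ) (hρ1 : ρ < 1)
    (hA : ∀ s : ℕ, ‖A ^ s‖ ≤ κ * ρ ^ s)
    (u : ℕ → EuclideanSpace ℝ (Fin m)) (U : ℝ) (hu : ∀ t : ℕ, ‖u t‖ ≤ U)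
    (w : ℕ → EuclideanSpace ℝ (Fin n))
    (x xnat : ℕ → EuclideanSpace ℝ (Fin n))
    (hx0 : x 0 = 0) (hx : ∀ t : ℕ, x (t + 1) = A (x t) + B (u t) + w t)
    (hxnat : ∀ t : ℕ, xnat t = ∑ s ∈ Finset.range t, (A ^ s) (w (t - 1 - s))) :
    ∀ h t : ℕ, 1 ≤ t →
      ‖x t - xnat t - ∑ s ∈ Finset.range (min h t), (A ^ s) (B (u (t - 1 - s)))‖
        ≤ κ * ‖B‖ * U * ρ ^ h / (1 - ρ) := by
  intro h t _
  have hx_sum := A.eq_sum_pow_apply_of_succ_eq hx0 (v := fun t => B (u t) + w t)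
    (fun t => by rw [hx, add_assoc]) t
  have htail : x t - xnat t - ∑ s ∈ range (min h t), (A ^ s) (B (u (t - 1 - s)))
      = ∑ s ∈ Ico h t, (A ^ s) (B (u (t - 1 - s))) := by
    have hIco : Ico (min h t) t = Ico h t := by ext; simp only [mem_Ico]; omega
    rw [hx_sum, hxnat]
    simp only [map_add, sum_add_distrib]
    rw [← sum_range_add_sum_Ico (fun s => (A ^ s) (B (u (t - 1 - s)))) (min_le_right h t), hIco]
    abel
  have hBu (s : ℕ) : ‖B (u (t - 1 - s))‖ ≤ ‖B‖ * U :=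
    (B.le_opNorm _).trans (mul_le_mul_of_nonneg_left (hu _) (norm_nonneg B))
  rw [htail, mul_assoc κ]
  exact norm_sum_Ico_pow_apply_le A hκ hρ0 hρ1 hA hBu h t
end
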